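/- arXiv:2111.15099 — 2 statements merged into one kernel-verified Lean document; each statement's English description precedes it below -/
import Mathlib

section
/- Under the same hypotheses (μ ≪ Lebesgue, u₀ Kantorovich potential, T₀ optimal map, 0 < η₀ < ℓ₀(T₀), f₀(x) = x − η₀∇u₀(x) a.e.), the pushforward μ̃ = (f₀)_#μ satisfies the exact identity W₁(μ̃, ν) = W₁(μ, ν) − η₀. -/
open MeasureTheory

noncomputable section

abbrev Euc (d : ℕ) := EuclideanSpace ℝ (Fin d)

/-- The Wasserstein-1 distance, defined through Kantorovich duality as the supremum of
`∫ u dμ - ∫ u dν` over 1-Lipschitz functions `u`. -/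
def W1 {d : ℕ} (μ ν : Measure (Euc d)) : ℝ :=
  sSup {r : ℝ | ∃ u : Euc d → ℝ, LipschitzWith 1 u ∧ r = (∫ x, u x ∂μ) - ∫ y, u y ∂ν}

/-- `u` is a Kantorovich potential for the pair `(μ, ν)`. -/
def IsKantorovichPotential {d : ℕ} (u : Euc d → ℝ) (μ ν : Measure (Euc d)) : Prop :=
  LipschitzWith 1 u ∧ (∫ x, u x ∂μ) - ∫ y, u y ∂ν = W1 μ ν

/-- `T` is an optimal transport map for the pair `(μ, ν)`. -/
def IsOptimalMap {d : ℕ} (T : Euc d → Euc d) (μ ν : Measure (Euc d)) : Prop :=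
  Measure.map T μ = ν ∧ (∫ x, ‖x - T x‖ ∂μ) = W1 μ ν

/-- The minimal transport length `ℓ₀(T) = essinf_μ |Id - T|`. -/
def ell0 {d : ℕ} (T : Euc d → Euc d) (μ : Measure (Euc d)) : ℝ :=
  essInf (fun x => ‖x - T x‖) μ

/-!
Since `u₀` and `T₀` both realise `W₁(μ, ν)`, the 1-Lipschitz bound
`u₀ x - u₀ (T₀ x) ≤ ‖x - T₀ x‖` integrates to an equality, so it is an equality for a.e. `x`:
`u₀` falls at unit rate along the segment `[x, T₀ x]`. Where `u₀` is differentiable this forces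
`∇u₀ x` to be the unit vector from `T₀ x` to `x`, so `f₀` moves `x` by exactly `η₀` along a
segment longer than `η₀`. The moved point still satisfies the equality against `T₀ x` and is `η₀`
closer to it; hence `u₀` certifies that the coupling of `(f₀)_#μ` with `ν` through `T₀` is
optimal, and its cost is `W₁(μ, ν) - η₀`.
-/

open Set AffineMap

section Lipschitz

variable {E : Type*} [NormedAddCommGroup E] {u : E → ℝ}

theorem LipschitzWith.sub_le_norm_sub (hu : LipschitzWith 1 u) (a b : E) :
    u a - u b ≤ ‖a - b‖ := by
  have := hu.le_add_mul a b
  rw [NNReal.coe_one, one_mul, dist_eq_norm] at this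
  linarith

variable [NormedSpace ℝ E]

theorem LipschitzWith.apply_lineMap_of_sub_eq_norm (hu : LipschitzWith 1 u) {x y : E}
    (h : u x - u y = ‖x - y‖) {t : ℝ} (ht : t ∈ Icc 0 1) :
    u (lineMap x y t) = u x - t * ‖x - y‖ := by
  have hleft := hu.sub_le_norm_sub x (lineMap x y t)
  have hright := hu.sub_le_norm_sub (lineMap x y t) y
  rw [← dist_eq_norm, dist_left_lineMap, Real.norm_of_nonneg ht.1, dist_eq_norm] at hleft
  rw [← dist_eq_norm, dist_lineMap_right, Real.norm_of_nonneg (sub_nonneg.2 ht.2),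
    dist_eq_norm] at hright
  linarith

theorem LipschitzWith.fderiv_sub_of_sub_eq_norm (hu : LipschitzWith 1 u) {x y : E}
    (hx : DifferentiableAt ℝ u x) (h : u x - u y = ‖x - y‖) :
    fderiv ℝ u x (y - x) = -‖x - y‖ := by
  have hline : HasDerivWithinAt (fun t : ℝ => u (lineMap x y t)) (fderiv ℝ u x (y - x))
      (Ici 0) 0 := by
    have hx' : HasFDerivAt u (fderiv ℝ u x) (lineMap x y (0 : ℝ)) := by simpa using hx.hasFDerivAt
    exact (hx'.comp_hasDerivAt (0 : ℝ) hasDerivAt_lineMap).hasDerivWithinAt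
  have hsegment : (fun t : ℝ => u (lineMap x y t)) =ᶠ[nhdsWithin 0 (Ici 0)]
      fun t => u x - t * ‖x - y‖ := by
    filter_upwards [Icc_mem_nhdsGE zero_lt_one] with t ht
    exact hu.apply_lineMap_of_sub_eq_norm h ht
  have haffine : HasDerivWithinAt (fun t : ℝ => u x - t * ‖x - y‖) (-‖x - y‖) (Ici 0) 0 := by
    simpa using ((hasDerivAt_id (0 : ℝ)).mul_const ‖x - y‖).const_sub (u x) |>.hasDerivWithinAt
  exact (uniqueDiffWithinAt_Ici 0).eq_deriv _
    (hline.congr_of_eventuallyEq hsegment.symm (by simp)) haffine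

end Lipschitz

section Gradient

variable {E : Type*} [NormedAddCommGroup E] [InnerProductSpace ℝ E] [CompleteSpace E] {u : E → ℝ}

theorem LipschitzWith.norm_gradient_le {K : NNReal} (hu : LipschitzWith K u) (x : E) :
    ‖gradient u x‖ ≤ K := by
  rw [gradient, LinearIsometryEquiv.norm_map]
  exact norm_fderiv_le_of_lipschitz ℝ hu

theorem LipschitzWith.gradient_eq_of_sub_eq_norm (hu : LipschitzWith 1 u) {x y : E}
    (hx : DifferentiableAt ℝ u x) (hxy : x ≠ y) (h : u x - u y = ‖x - y‖) :
    gradient u x = ‖x - y‖⁻¹ • (x - y) := by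
  have hxy' : x - y ≠ 0 := sub_ne_zero.2 hxy
  have hunit : ‖‖x - y‖⁻¹ • (x - y)‖ = 1 := norm_smul_inv_norm hxy'
  have hslope : fderiv ℝ u x (x - y) = ‖x - y‖ := by
    rw [← neg_sub y x, map_neg, hu.fderiv_sub_of_sub_eq_norm hx h, neg_neg, neg_sub]
  have hinner : inner ℝ (gradient u x) (‖x - y‖⁻¹ • (x - y)) = 1 := by
    rw [real_inner_smul_right, gradient, InnerProductSpace.toDual_symm_apply, hslope,
      inv_mul_cancel₀ (norm_ne_zero_iff.2 hxy')]
  have hnorm : ‖gradient u x‖ = 1 := by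
    refine le_antisymm (by simpa using hu.norm_gradient_le x) ?_
    simpa [hinner, hunit] using real_inner_le_norm (gradient u x) (‖x - y‖⁻¹ • (x - y))
  exact (inner_eq_one_iff_of_norm_eq_one hnorm hunit).1 hinner

def gradientStep (u : E → ℝ) (η : ℝ) (x : E) : E := x - η • gradient u x

theorem LipschitzWith.gradientStep_eq_lineMap (hu : LipschitzWith 1 u) {x y : E}
    (hx : DifferentiableAt ℝ u x) (hxy : x ≠ y) (h : u x - u y = ‖x - y‖) (η : ℝ) :
    gradientStep u η x = lineMap x y (η / ‖x - y‖) := by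
  rw [gradientStep, hu.gradient_eq_of_sub_eq_norm hx hxy h, lineMap_apply_module', div_eq_mul_inv]
  module

theorem LipschitzWith.gradientStep_mem_segment (hu : LipschitzWith 1 u) {x y : E}
    (hx : DifferentiableAt ℝ u x) (h : u x - u y = ‖x - y‖) {η : ℝ} (hη : 0 < η)
    (hηxy : η ≤ ‖x - y‖) : gradientStep u η x ∈ segment ℝ x y := by
  rw [hu.gradientStep_eq_lineMap hx (norm_sub_pos_iff.1 (hη.trans_le hηxy)) h]
  exact lineMap_mem_segment ℝ x y ⟨by positivity, div_le_one_of_le₀ hηxy (norm_nonneg _)⟩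

theorem LipschitzWith.apply_gradientStep (hu : LipschitzWith 1 u) {x y : E}
    (hx : DifferentiableAt ℝ u x) (h : u x - u y = ‖x - y‖) {η : ℝ} (hη : 0 < η)
    (hηxy : η ≤ ‖x - y‖) : u (gradientStep u η x) = u x - η := by
  have hxy : 0 < ‖x - y‖ := hη.trans_le hηxy
  rw [hu.gradientStep_eq_lineMap hx (norm_sub_pos_iff.1 hxy) h,
    hu.apply_lineMap_of_sub_eq_norm h ⟨by positivity, div_le_one_of_le₀ hηxy hxy.le⟩,
    div_mul_cancel₀ _ hxy.ne']

theorem LipschitzWith.norm_gradientStep_sub (hu : LipschitzWith 1 u) {x y : E}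
    (hx : DifferentiableAt ℝ u x) (h : u x - u y = ‖x - y‖) {η : ℝ} (hη : 0 < η)
    (hηxy : η ≤ ‖x - y‖) : ‖gradientStep u η x - y‖ = ‖x - y‖ - η := by
  have hxy : 0 < ‖x - y‖ := hη.trans_le hηxy
  rw [hu.gradientStep_eq_lineMap hx (norm_sub_pos_iff.1 hxy) h, ← dist_eq_norm,
    dist_lineMap_right, Real.norm_of_nonneg (sub_nonneg.2 (div_le_one_of_le₀ hηxy hxy.le)),
    dist_eq_norm]
  field_simp

variable [MeasurableSpace E] [BorelSpace E] [SecondCountableTopology E]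

theorem measurable_gradientStep (u : E → ℝ) (η : ℝ) : Measurable (gradientStep u η) :=
  measurable_id.sub <| measurable_const.smul <|
    (InnerProductSpace.toDual ℝ E).symm.continuous.measurable.comp (measurable_fderiv ℝ u)

end Gradient

section Coupling

variable {α E : Type*} [MeasurableSpace α] {μ : Measure α} [IsFiniteMeasure μ]

theorem Continuous.integrable_comp_of_ae_mem_compact [TopologicalSpace E] [MeasurableSpace E]
    [OpensMeasurableSpace E] {u : E → ℝ} (hu : Continuous u) {K : Set E} (hK : IsCompact K)
    {g : α → E} (hg : AEMeasurable g μ) (hgK : ∀ᵐ x ∂μ, g x ∈ K) :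
    Integrable (fun x => u (g x)) μ := by
  obtain ⟨C, hC⟩ := hK.exists_bound_of_continuousOn hu.continuousOn
  exact .of_bound (hu.measurable.comp_aemeasurable hg).aestronglyMeasurable C
    (hgK.mono fun x hx => hC _ hx)

variable [NormedAddCommGroup E] [MeasurableSpace E] [BorelSpace E]
  {K : Set E} {f g : α → E} {u : E → ℝ}

theorem Continuous.integrable_sub_comp_of_ae_mem_compact (hu : Continuous u) (hK : IsCompact K)
    (hf : AEMeasurable f μ) (hg : AEMeasurable g μ) (hfK : ∀ᵐ x ∂μ, f x ∈ K)
    (hgK : ∀ᵐ x ∂μ, g x ∈ K) : Integrable (fun x => u (f x) - u (g x)) μ :=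
  (hu.integrable_comp_of_ae_mem_compact hK hf hfK).sub
    (hu.integrable_comp_of_ae_mem_compact hK hg hgK)

theorem integral_map_sub_integral_map (hK : IsCompact K) (hf : AEMeasurable f μ)
    (hg : AEMeasurable g μ) (hfK : ∀ᵐ x ∂μ, f x ∈ K) (hgK : ∀ᵐ x ∂μ, g x ∈ K)
    (hu : Continuous u) :
    ∫ y, u y ∂μ.map f - ∫ y, u y ∂μ.map g = ∫ x, (u (f x) - u (g x)) ∂μ := by
  rw [integral_map hf hu.aestronglyMeasurable, integral_map hg hu.aestronglyMeasurable,
    integral_sub (hu.integrable_comp_of_ae_mem_compact hK hf hfK)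
      (hu.integrable_comp_of_ae_mem_compact hK hg hgK)]

variable [SecondCountableTopology E]

theorem integrable_norm_sub_of_ae_mem_compact (hK : IsCompact K) (hf : AEMeasurable f μ)
    (hg : AEMeasurable g μ) (hfK : ∀ᵐ x ∂μ, f x ∈ K) (hgK : ∀ᵐ x ∂μ, g x ∈ K) :
    Integrable (fun x => ‖f x - g x‖) μ :=
  (continuous_fst.sub continuous_snd).norm.integrable_comp_of_ae_mem_compact (hK.prod hK)
    (hf.prodMk hg) (hfK.and hgK)

theorem integral_map_sub_integral_map_le (hK : IsCompact K) (hf : AEMeasurable f μ)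
    (hg : AEMeasurable g μ) (hfK : ∀ᵐ x ∂μ, f x ∈ K) (hgK : ∀ᵐ x ∂μ, g x ∈ K)
    (hu : LipschitzWith 1 u) :
    ∫ y, u y ∂μ.map f - ∫ y, u y ∂μ.map g ≤ ∫ x, ‖f x - g x‖ ∂μ := by
  rw [integral_map_sub_integral_map hK hf hg hfK hgK hu.continuous]
  exact integral_mono (hu.continuous.integrable_sub_comp_of_ae_mem_compact hK hf hg hfK hgK)
    (integrable_norm_sub_of_ae_mem_compact hK hf hg hfK hgK) fun x => hu.sub_le_norm_sub _ _

theorem ae_sub_eq_norm_of_integral_map_sub_integral_map_eq (hK : IsCompact K)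
    (hf : AEMeasurable f μ) (hg : AEMeasurable g μ) (hfK : ∀ᵐ x ∂μ, f x ∈ K)
    (hgK : ∀ᵐ x ∂μ, g x ∈ K) (hu : LipschitzWith 1 u)
    (h : ∫ y, u y ∂μ.map f - ∫ y, u y ∂μ.map g = ∫ x, ‖f x - g x‖ ∂μ) :
    ∀ᵐ x ∂μ, u (f x) - u (g x) = ‖f x - g x‖ := by
  have hint := hu.continuous.integrable_sub_comp_of_ae_mem_compact hK hf hg hfK hgK
  have hint_norm := integrable_norm_sub_of_ae_mem_compact hK hf hg hfK hgK
  have hgap : ∫ x, (‖f x - g x‖ - (u (f x) - u (g x))) ∂μ = 0 := by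
    rw [integral_sub hint_norm hint, ← h,
      integral_map_sub_integral_map hK hf hg hfK hgK hu.continuous, sub_self]
  have hgap_nonneg : 0 ≤ fun x => ‖f x - g x‖ - (u (f x) - u (g x)) := fun x =>
    sub_nonneg.2 (hu.sub_le_norm_sub _ _)
  filter_upwards [(integral_eq_zero_iff_of_nonneg hgap_nonneg (hint_norm.sub hint)).1 hgap]
    with x hx
  exact (sub_eq_zero.1 hx).symm

end Coupling

theorem W1_eq_of_forall_le_of_eq {d : ℕ} {μ ν : Measure (Euc d)} {c : ℝ}
    (hle : ∀ u : Euc d → ℝ, LipschitzWith 1 u → ∫ x, u x ∂μ - ∫ y, u y ∂ν ≤ c)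
    {u₀ : Euc d → ℝ} (hu₀ : LipschitzWith 1 u₀) (heq : ∫ x, u₀ x ∂μ - ∫ y, u₀ y ∂ν = c) :
    W1 μ ν = c :=
  IsGreatest.csSup_eq ⟨⟨u₀, hu₀, heq.symm⟩, by rintro _ ⟨u, hu, rfl⟩; exact hle u hu⟩

theorem W1_map_eq_integral_norm_sub_of_ae_sub_eq_norm {α : Type*} [MeasurableSpace α]
    {μ : Measure α} [IsFiniteMeasure μ] {d : ℕ} {K : Set (Euc d)} (hK : IsCompact K)
    {f g : α → Euc d} (hf : AEMeasurable f μ) (hg : AEMeasurable g μ)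
    (hfK : ∀ᵐ x ∂μ, f x ∈ K) (hgK : ∀ᵐ x ∂μ, g x ∈ K) {u₀ : Euc d → ℝ}
    (hu₀ : LipschitzWith 1 u₀) (hcal : ∀ᵐ x ∂μ, u₀ (f x) - u₀ (g x) = ‖f x - g x‖) :
    W1 (μ.map f) (μ.map g) = ∫ x, ‖f x - g x‖ ∂μ := by
  refine W1_eq_of_forall_le_of_eq
    (fun u hu => integral_map_sub_integral_map_le hK hf hg hfK hgK hu) hu₀ ?_
  rw [integral_map_sub_integral_map hK hf hg hfK hgK hu₀.continuous]
  exact integral_congr_ae hcal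

theorem W1_decreases_exactly_general {d : ℕ} (Ω : Set (Euc d))
    (hΩc : IsCompact Ω) (hΩconv : Convex ℝ Ω)
    (μ ν : Measure (Euc d)) [IsProbabilityMeasure μ] [IsProbabilityMeasure ν]
    (hμΩ : μ Ωᶜ = 0) (hνΩ : ν Ωᶜ = 0) (hac : μ ≪ volume)
    (u₀ : Euc d → ℝ) (hu₀ : IsKantorovichPotential u₀ μ ν)
    (T₀ : Euc d → Euc d) (hT₀ : IsOptimalMap T₀ μ ν)
    (η₀ : ℝ) (hη₀pos : 0 < η₀) (hη₀ : η₀ < ell0 T₀ μ)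
    (f₀ : Euc d → Euc d)
    (hf₀ : ∀ x, DifferentiableAt ℝ u₀ x → f₀ x = x - η₀ • gradient u₀ x) :
    W1 (Measure.map f₀ μ) ν = W1 μ ν - η₀ := by
  obtain ⟨hu₀, hu₀W1⟩ := hu₀
  obtain ⟨rfl, hT₀W1⟩ := hT₀
  have hdiff : ∀ᵐ x ∂μ, DifferentiableAt ℝ u₀ x := hac.ae_le hu₀.ae_differentiableAt
  rw [Measure.map_congr (g := gradientStep u₀ η₀) (hdiff.mono fun x hx => hf₀ x hx)]
  have hT₀m : AEMeasurable T₀ μ := .of_map_ne_zero (IsProbabilityMeasure.ne_zero _)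
  have hxΩ : ∀ᵐ x ∂μ, x ∈ Ω := mem_ae_iff.2 hμΩ
  have hTΩ : ∀ᵐ x ∂μ, T₀ x ∈ Ω := ae_of_ae_map hT₀m (mem_ae_iff.2 hνΩ)
  have hopt : ∀ᵐ x ∂μ, u₀ x - u₀ (T₀ x) = ‖x - T₀ x‖ :=
    ae_sub_eq_norm_of_integral_map_sub_integral_map_eq hΩc aemeasurable_id' hT₀m hxΩ hTΩ hu₀
      (by rw [Measure.map_id', hu₀W1, hT₀W1])
  have hfar : ∀ᵐ x ∂μ, η₀ < ‖x - T₀ x‖ := ae_lt_of_lt_essInf hη₀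
    (Filter.isBoundedUnder_of_eventually_ge (.of_forall fun _ => norm_nonneg _))
  have hstep : ∀ᵐ x ∂μ, gradientStep u₀ η₀ x ∈ Ω ∧
      u₀ (gradientStep u₀ η₀ x) - u₀ (T₀ x) = ‖gradientStep u₀ η₀ x - T₀ x‖ ∧
      ‖gradientStep u₀ η₀ x - T₀ x‖ = ‖x - T₀ x‖ - η₀ := by
    filter_upwards [hxΩ, hTΩ, hdiff, hopt, hfar] with x hx hTx hdiff hopt hfar
    have hcloser := hu₀.norm_gradientStep_sub hdiff hopt hη₀pos hfar.le
    refine ⟨hΩconv.segment_subset hx hTx (hu₀.gradientStep_mem_segment hdiff hopt hη₀pos hfar.le),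
      ?_, hcloser⟩
    rw [hcloser, hu₀.apply_gradientStep hdiff hopt hη₀pos hfar.le]
    linarith
  rw [W1_map_eq_integral_norm_sub_of_ae_sub_eq_norm hΩc
      (measurable_gradientStep u₀ η₀).aemeasurable hT₀m (hstep.mono fun _ h => h.1) hTΩ hu₀
      (hstep.mono fun _ h => h.2.1),
    integral_congr_ae (hstep.mono fun _ h => h.2.2),
    integral_sub (integrable_norm_sub_of_ae_mem_compact hΩc aemeasurable_id' hT₀m hxΩ hTΩ)
      (integrable_const η₀), hT₀W1, integral_const]
  simp

/-- if `0 < η₀ < ℓ₀(T₀)`, then `W₁((f₀)_#μ, ν) = W₁(μ, ν) - η₀`. -/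
theorem W1_decreases_exactly {d : ℕ} (Ω : Set (Euc d))
    (hΩc : IsCompact Ω) (hΩconv : Convex ℝ Ω)
    (μ ν : Measure (Euc d)) [IsProbabilityMeasure μ] [IsProbabilityMeasure ν]
    (hμΩ : μ Ωᶜ = 0) (hνΩ : ν Ωᶜ = 0) (hac : μ ≪ volume)
    (u₀ : Euc d → ℝ) (hu₀ : IsKantorovichPotential u₀ μ ν)
    (T₀ : Euc d → Euc d) (hT₀ : IsOptimalMap T₀ μ ν)
    (η₀ : ℝ) (hη₀pos : 0 < η₀) (hη₀ : η₀ < ell0 T₀ μ)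
    (f₀ : Euc d → Euc d) (hf₀m : Measurable f₀)
    (hf₀ : ∀ x, DifferentiableAt ℝ u₀ x → f₀ x = x - η₀ • gradient u₀ x)
    (hf₀' : ∀ x, ¬ DifferentiableAt ℝ u₀ x → f₀ x = x) :
    W1 (Measure.map f₀ μ) ν = W1 μ ν - η₀ :=
  W1_decreases_exactly_general Ω hΩc hΩconv μ ν hμΩ hνΩ hac u₀ hu₀ T₀ hT₀ η₀ hη₀pos hη₀ f₀ hf₀
end
end

section
/- Let μ ≪ Lebesgue, T₀ an optimal map for (μ,ν) with ℓ₀(T₀) > 0, and let u₀, ũ₀ be two Kantorovich potentials for the pair (μ,ν). Then ∇u₀(x) = ∇ũ₀(x) for μ-almost every x. -/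
/-!
A Kantorovich potential `u` saturates its Lipschitz bound along the transport:
`u x - u (T₀ x) = ‖x - T₀ x‖` for μ-a.e. `x`, because the nonnegative gap
`‖x - T₀ x‖ - (u x - u (T₀ x))` integrates to `W1 μ ν - W1 μ ν = 0`. A 1-Lipschitz function that
decreases at unit rate along the segment from `x` to `T₀ x ≠ x` and is differentiable at `x` has
gradient `(x - T₀ x) / ‖x - T₀ x‖`, by the equality case of Cauchy–Schwarz. Rademacher's theorem
and `μ ≪ volume` give differentiability μ-a.e., and `ℓ₀(T₀) > 0` gives `x ≠ T₀ x` μ-a.e., so both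
potentials have this same gradient μ-a.e.
-/

open MeasureTheory

noncomputable section

open Filter Set AffineMap

section InnerProductSpace

variable {F : Type*} [NormedAddCommGroup F] [InnerProductSpace ℝ F]

theorem eq_inv_norm_smul_of_norm_le_one_of_inner_eq_norm {g w : F} (hw : w ≠ 0)
    (hg : ‖g‖ ≤ 1) (h : inner ℝ g w = ‖w‖) : g = ‖w‖⁻¹ • w := by
  have hw0 : 0 < ‖w‖ := norm_pos_iff.mpr hw
  have hg1 : ‖g‖ = 1 := by
    refine le_antisymm hg (le_of_mul_le_mul_right ?_ hw0)
    simpa [h] using real_inner_le_norm g w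
  have hsmul : ‖w‖ • g = ‖g‖ • w := inner_eq_norm_mul_iff_real.mp (by rw [h, hg1, one_mul])
  rw [hg1, one_smul] at hsmul
  rw [eq_inv_smul_iff₀ hw0.ne', hsmul]

end InnerProductSpace

theorem LipschitzWith.sub_eq_dist_of_dist_add_dist_eq {X : Type*} [PseudoMetricSpace X]
    {u : X → ℝ} (hu : LipschitzWith 1 u) {x y z : X} (hxy : u x - u y = dist x y)
    (hz : dist x z + dist z y = dist x y) : u x - u z = dist x z := by
  have hxz := hu.le_add_mul x z
  have hzy := hu.le_add_mul z y
  simp only [NNReal.coe_one, one_mul] at hxz hzy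
  linarith

section NormedSpace

variable {E : Type*} [NormedAddCommGroup E] [NormedSpace ℝ E] {u : E → ℝ} {x y : E}

theorem LipschitzWith.apply_lineMap_eq_of_sub_eq_dist (hu : LipschitzWith 1 u)
    (hxy : u x - u y = dist x y) {t : ℝ} (ht : t ∈ Icc 0 1) :
    u (lineMap x y t) = u x - t * dist x y := by
  have hleft : dist x (lineMap x y t) = t * dist x y := by
    rw [dist_comm, dist_lineMap_left, Real.norm_of_nonneg ht.1]
  have hright : dist (lineMap x y t) y = (1 - t) * dist x y := by
    rw [dist_lineMap_right, Real.norm_of_nonneg (sub_nonneg.2 ht.2)]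
  have := hu.sub_eq_dist_of_dist_add_dist_eq hxy (by rw [hleft, hright]; ring)
  linarith

/-- On the segment `[x, y]` the function is affine with slope `-dist x y`, and a one-sided
derivative at `x` already determines the Fréchet derivative in direction `y - x`. -/
theorem LipschitzWith.fderiv_apply_sub_eq_norm_of_sub_eq_dist (hu : LipschitzWith 1 u)
    (hd : DifferentiableAt ℝ u x) (hxy : u x - u y = dist x y) :
    fderiv ℝ u x (x - y) = ‖x - y‖ := by
  have hfull : HasDerivAt (fun t : ℝ => u (lineMap x y t)) (fderiv ℝ u x (y - x)) 0 := by
    have hd' : HasFDerivAt u (fderiv ℝ u x) (lineMap x y (0 : ℝ)) := by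
      simpa using hd.hasFDerivAt
    exact hd'.comp_hasDerivAt 0 hasDerivAt_lineMap
  have hright : HasDerivWithinAt (fun t : ℝ => u (lineMap x y t)) (-dist x y) (Ici 0) 0 := by
    have haffine : HasDerivAt (fun t : ℝ => u x - t * dist x y) (-dist x y) 0 := by
      simpa using ((hasDerivAt_id (0 : ℝ)).mul_const (dist x y)).const_sub (u x)
    refine haffine.hasDerivWithinAt.congr_of_eventuallyEq ?_ (by simp)
    filter_upwards [Icc_mem_nhdsGE (zero_lt_one' ℝ)] with t ht
    exact hu.apply_lineMap_eq_of_sub_eq_dist hxy ht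
  have hdir : fderiv ℝ u x (y - x) = -dist x y :=
    (uniqueDiffOn_Ici 0 0 self_mem_Ici).eq_deriv _ hfull.hasDerivWithinAt hright
  rw [← neg_sub y x, map_neg, hdir, neg_neg, dist_eq_norm, neg_sub]

end NormedSpace

theorem LipschitzWith.gradient_eq_of_sub_eq_dist {F : Type*} [NormedAddCommGroup F]
    [InnerProductSpace ℝ F] [CompleteSpace F] {u : F → ℝ} (hu : LipschitzWith 1 u) {x y : F}
    (hd : DifferentiableAt ℝ u x) (hne : x ≠ y) (hxy : u x - u y = dist x y) :
    gradient u x = ‖x - y‖⁻¹ • (x - y) := by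
  refine eq_inv_norm_smul_of_norm_le_one_of_inner_eq_norm (sub_ne_zero.2 hne) ?_ ?_
  · rw [gradient, LinearIsometryEquiv.norm_map]
    simpa using norm_fderiv_le_of_lipschitz ℝ hu (x₀ := x)
  · rw [gradient, InnerProductSpace.toDual_symm_apply,
      hu.fderiv_apply_sub_eq_norm_of_sub_eq_dist hd hxy]

theorem Continuous.integrable_of_measure_compl_eq_zero {X E : Type*} [TopologicalSpace X]
    [T2Space X] [MeasurableSpace X] [OpensMeasurableSpace X] [NormedAddCommGroup E]
    {μ : Measure X} [IsFiniteMeasure μ] {f : X → E} (hf : Continuous f) {K : Set X}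
    (hK : IsCompact K) (hμK : μ Kᶜ = 0) : Integrable f μ := by
  rw [← Measure.restrict_eq_self_of_ae_mem (ae_iff.mpr hμK)]
  exact hf.continuousOn.integrableOn_compact hK

section Transport

variable {d : ℕ} {Ω : Set (Euc d)} {μ ν : Measure (Euc d)} {T : Euc d → Euc d} {u : Euc d → ℝ}

theorem IsKantorovichPotential.ae_sub_apply_eq_norm [IsFiniteMeasure μ] [NeZero ν]
    (hu : IsKantorovichPotential u μ ν) (hT : IsOptimalMap T μ ν) (hΩ : IsCompact Ω)
    (hμΩ : μ Ωᶜ = 0) (hνΩ : ν Ωᶜ = 0) :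
    ∀ᵐ x ∂μ, u x - u (T x) = ‖x - T x‖ := by
  obtain ⟨hpush, hcost⟩ := hT
  have hTm : AEMeasurable T μ := .of_map_ne_zero (hpush ▸ NeZero.ne ν)
  have : IsFiniteMeasure ν := hpush ▸ inferInstance
  have hint_id : Integrable (fun x => x) μ :=
    continuous_id.integrable_of_measure_compl_eq_zero hΩ hμΩ
  have hint_T : Integrable T μ :=
    (integrable_map_measure continuous_id.aestronglyMeasurable hTm).1
      (hpush ▸ continuous_id.integrable_of_measure_compl_eq_zero hΩ hνΩ)
  have hint_cost : Integrable (fun x => ‖x - T x‖) μ := (hint_id.sub hint_T).norm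
  have hint_u : Integrable (fun x => u x) μ :=
    hu.1.continuous.integrable_of_measure_compl_eq_zero hΩ hμΩ
  have hint_uT : Integrable (fun x => u (T x)) μ :=
    (integrable_map_measure hu.1.continuous.aestronglyMeasurable hTm).1
      (hpush ▸ hu.1.continuous.integrable_of_measure_compl_eq_zero hΩ hνΩ)
  have hint_diff : Integrable (fun x => u x - u (T x)) μ := hint_u.sub hint_uT
  have hgap_nonneg : 0 ≤ fun x => ‖x - T x‖ - (u x - u (T x)) := fun x => by
    have := hu.1.le_add_mul x (T x)
    simp only [NNReal.coe_one, one_mul, dist_eq_norm] at this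
    simp only [Pi.zero_apply]
    linarith
  have hgap_integral : ∫ x, ‖x - T x‖ - (u x - u (T x)) ∂μ = 0 := by
    rw [integral_sub hint_cost hint_diff, integral_sub hint_u hint_uT, hcost,
      ← integral_map hTm hu.1.continuous.aestronglyMeasurable, hpush, hu.2, sub_self]
  filter_upwards [(integral_eq_zero_iff_of_nonneg hgap_nonneg
    (hint_cost.sub hint_diff)).1 hgap_integral] with x hx
  exact (sub_eq_zero.1 hx).symm

theorem IsKantorovichPotential.ae_gradient_eq [IsFiniteMeasure μ] [NeZero ν]
    (hu : IsKantorovichPotential u μ ν) (hT : IsOptimalMap T μ ν) (hΩ : IsCompact Ω)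
    (hμΩ : μ Ωᶜ = 0) (hνΩ : ν Ωᶜ = 0) (hac : μ ≪ volume) :
    ∀ᵐ x ∂μ, x ≠ T x → gradient u x = ‖x - T x‖⁻¹ • (x - T x) := by
  filter_upwards [hac.ae_le hu.1.ae_differentiableAt,
    hu.ae_sub_apply_eq_norm hT hΩ hμΩ hνΩ] with x hdiff hsat hne
  exact hu.1.gradient_eq_of_sub_eq_dist hdiff hne (by rw [hsat, dist_eq_norm])

end Transport

theorem gradients_of_potentials_agree_general {d : ℕ} (Ω : Set (Euc d))
    (hΩc : IsCompact Ω)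
    (μ ν : Measure (Euc d)) [IsProbabilityMeasure μ] [IsProbabilityMeasure ν]
    (hμΩ : μ Ωᶜ = 0) (hνΩ : ν Ωᶜ = 0) (hac : μ ≪ volume)
    (T₀ : Euc d → Euc d) (hT₀ : IsOptimalMap T₀ μ ν) (hℓ : 0 < ell0 T₀ μ)
    (u₀ v₀ : Euc d → ℝ)
    (hu₀ : IsKantorovichPotential u₀ μ ν) (hv₀ : IsKantorovichPotential v₀ μ ν) :
    ∀ᵐ x ∂μ, gradient u₀ x = gradient v₀ x := by
  have hmoves : ∀ᵐ x ∂μ, x ≠ T₀ x := by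
    filter_upwards [ae_lt_of_lt_essInf hℓ (isBoundedUnder_of ⟨0, fun x => norm_nonneg _⟩)]
      with x hx
    exact sub_ne_zero.1 (norm_pos_iff.1 hx)
  filter_upwards [hmoves, hu₀.ae_gradient_eq hT₀ hΩc hμΩ hνΩ hac,
    hv₀.ae_gradient_eq hT₀ hΩc hμΩ hνΩ hac] with x hx hu hv
  rw [hu hx, hv hx]

/-- if `ℓ₀(T₀) > 0` then any two Kantorovich potentials for `(μ, ν)` have
equal gradients μ-almost everywhere. -/
theorem gradients_of_potentials_agree {d : ℕ} (Ω : Set (Euc d))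
    (hΩc : IsCompact Ω) (hΩconv : Convex ℝ Ω)
    (μ ν : Measure (Euc d)) [IsProbabilityMeasure μ] [IsProbabilityMeasure ν]
    (hμΩ : μ Ωᶜ = 0) (hνΩ : ν Ωᶜ = 0) (hac : μ ≪ volume)
    (T₀ : Euc d → Euc d) (hT₀ : IsOptimalMap T₀ μ ν) (hℓ : 0 < ell0 T₀ μ)
    (u₀ v₀ : Euc d → ℝ)
    (hu₀ : IsKantorovichPotential u₀ μ ν) (hv₀ : IsKantorovichPotential v₀ μ ν) :
    ∀ᵐ x ∂μ, gradient u₀ x = gradient v₀ x :=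
  gradients_of_potentials_agree_general Ω hΩc μ ν hμΩ hνΩ hac T₀ hT₀ hℓ u₀ v₀ hu₀ hv₀
end
end
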